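/- Let H be a complex Hilbert space and let 𝒜 ⊆ B(H) be an abelian von Neumann algebra, with commutant 𝒜'. Then for any two vectors η₁, η₂ ∈ H, the set L = {t ∈ ℂ, t ≠ 0 : [𝒜'(η₁ + t·η₂)] ≠ [𝒜'η₁] ∨ [𝒜'η₂]} is at most countable; that is, for all but countably many nonzero scalars t, the closed linear span of the orbit 𝒜'(η₁ + t·η₂) equals the closed linear span of the union of the orbits 𝒜'η₁ and 𝒜'η₂. -/

import Mathlib

open scoped InnerProductSpace

namespace AbelianVNAOrbitAux

variable {H : Type*} [NormedAddCommGroup H] [InnerProductSpace ℂ H] [CompleteSpace H]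

/-- The closed linear span of the orbit of a vector under a von Neumann algebra. -/
noncomputable def orb (M : VonNeumannAlgebra H) (ξ : H) : Submodule ℂ H :=
  (Submodule.span ℂ ((fun T : H →L[ℂ] H => T ξ) '' (M : Set (H →L[ℂ] H)))).topologicalClosure

/-- Invariance of a submodule under an algebra of operators. -/
def Inv (M : VonNeumannAlgebra H) (U : Submodule ℂ H) : Prop :=
  ∀ T ∈ M, ∀ x ∈ U, T x ∈ U

lemma apply_mem_orb (M : VonNeumannAlgebra H) {T : H →L[ℂ] H} (hT : T ∈ M) (ξ : H) :
    T ξ ∈ orb M ξ :=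
  Submodule.le_topologicalClosure _ (Submodule.subset_span ⟨T, hT, rfl⟩)

lemma inv_orb (M : VonNeumannAlgebra H) (ξ : H) : Inv M (orb M ξ) := by
  intro T hT x hx
  set S : Set H := (fun T : H →L[ℂ] H => T ξ) '' (M : Set (H →L[ℂ] H)) with hS
  have himg : T '' S ⊆ (Submodule.span ℂ S : Set H) := by
    rintro _ ⟨_, ⟨T', hT', rfl⟩, rfl⟩
    exact Submodule.subset_span ⟨T * T', mul_mem hT hT', rfl⟩
  have hmap : (Submodule.span ℂ S).map (T : H →ₗ[ℂ] H) ≤ Submodule.span ℂ S := by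
    rw [Submodule.map_span]
    exact Submodule.span_le.2 himg
  have hmaps : Set.MapsTo T (Submodule.span ℂ S : Set H) (Submodule.span ℂ S : Set H) :=
    fun y hy => hmap ⟨y, hy, rfl⟩
  exact map_mem_closure T.continuous hx hmaps

lemma inv_sup {M : VonNeumannAlgebra H} {U V : Submodule ℂ H} (hU : Inv M U) (hV : Inv M V) :
    Inv M (U ⊔ V) := by
  intro T hT x hx
  rcases Submodule.mem_sup.1 hx with ⟨a, ha, b, hb, rfl⟩
  rw [map_add]
  exact Submodule.mem_sup.2 ⟨T a, hU T hT a ha, T b, hV T hT b hb, rfl⟩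

lemma inv_inf {M : VonNeumannAlgebra H} {U V : Submodule ℂ H} (hU : Inv M U) (hV : Inv M V) :
    Inv M (U ⊓ V) :=
  fun T hT x hx => ⟨hU T hT x hx.1, hV T hT x hx.2⟩

lemma inv_closure {M : VonNeumannAlgebra H} {U : Submodule ℂ H} (hU : Inv M U) :
    Inv M U.topologicalClosure :=
  fun T hT x hx => map_mem_closure T.continuous hx (fun y hy => hU T hT y hy)

lemma inv_orthogonal {M : VonNeumannAlgebra H} {U : Submodule ℂ H} (hU : Inv M U) : Inv M Uᗮ := by
  intro T hT x hx
  rw [Submodule.mem_orthogonal] at hx ⊢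
  intro u hu
  have hadj : ContinuousLinearMap.adjoint T ∈ M := by
    rw [← ContinuousLinearMap.star_eq_adjoint]; exact star_mem hT
  rw [← ContinuousLinearMap.adjoint_inner_left]
  exact hx _ (hU _ hadj u hu)

/-- Orthogonal projection onto a closed submodule, as an operator `H →L[ℂ] H`. -/
noncomputable def projC (U : Submodule ℂ H) (hU : IsClosed (U : Set H)) : H →L[ℂ] H :=
  haveI : CompleteSpace U := hU.completeSpace_coe
  U.subtypeL.comp (U.orthogonalProjectionOnto)

lemma projC_apply (U : Submodule ℂ H) (hU : IsClosed (U : Set H)) (x : H) :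
    haveI : CompleteSpace U := hU.completeSpace_coe
    projC U hU x = (U.orthogonalProjectionOnto x : H) := rfl

lemma projC_mem (U : Submodule ℂ H) (hU : IsClosed (U : Set H)) (x : H) :
    projC U hU x ∈ U := by
  haveI : CompleteSpace U := hU.completeSpace_coe
  rw [projC_apply]
  exact (U.orthogonalProjectionOnto x).2

lemma projC_eq_self (U : Submodule ℂ H) (hU : IsClosed (U : Set H)) {x : H} (hx : x ∈ U) :
    projC U hU x = x := by
  haveI : CompleteSpace U := hU.completeSpace_coe
  rw [projC_apply]
  exact Submodule.starProjection_eq_self_iff.2 hx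

lemma projC_eq_zero (U : Submodule ℂ H) (hU : IsClosed (U : Set H)) {x : H} (hx : x ∈ Uᗮ) :
    projC U hU x = 0 := by
  haveI : CompleteSpace U := hU.completeSpace_coe
  rw [projC_apply, Submodule.orthogonalProjectionOnto_apply_of_mem_orthogonal hx,
    Submodule.coe_zero]

lemma projC_inner (U : Submodule ℂ H) (hU : IsClosed (U : Set H)) (x y : H) :
    ⟪projC U hU x, y⟫_ℂ = ⟪x, projC U hU y⟫_ℂ := by
  haveI : CompleteSpace U := hU.completeSpace_coe
  rw [projC_apply, projC_apply]
  exact Submodule.inner_starProjection_left_eq_right U x y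

lemma sub_projC_mem (U : Submodule ℂ H) (hU : IsClosed (U : Set H)) (x : H) :
    x - projC U hU x ∈ Uᗮ := by
  haveI : CompleteSpace U := hU.completeSpace_coe
  rw [projC_apply]
  exact Submodule.sub_starProjection_mem_orthogonal x

lemma projC_comm {M : VonNeumannAlgebra H} {U : Submodule ℂ H} (hU : IsClosed (U : Set H))
    (hInv : Inv M U) {T : H →L[ℂ] H} (hT : T ∈ M) (x : H) :
    projC U hU (T x) = T (projC U hU x) := by
  have hperp : Inv M Uᗮ := inv_orthogonal hInv
  have hdec : T x = T (projC U hU x) + T (x - projC U hU x) := by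
    rw [← map_add]
    congr 1
    abel
  rw [hdec, map_add, projC_eq_self U hU (hInv T hT _ (projC_mem U hU x)),
    projC_eq_zero U hU (hperp T hT _ (sub_projC_mem U hU x)), add_zero]

theorem aux (M : VonNeumannAlgebra H)
    (hab : ∀ x ∈ M.commutant, ∀ y ∈ M.commutant, x * y = y * x) (η₁ η₂ : H) :
    {t : ℂ | t ≠ 0 ∧
      orb M (η₁ + t • η₂) ≠ (orb M η₁ ⊔ orb M η₂).topologicalClosure}.Countable := by
  classical
  set Kt : ℂ → Submodule ℂ H := fun t => orb M (η₁ + t • η₂) with hKtdef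
  set K : Submodule ℂ H := (orb M η₁ ⊔ orb M η₂).topologicalClosure with hKdef
  have hKcl : IsClosed (K : Set H) := Submodule.isClosed_topologicalClosure _
  have hKtcl : ∀ t : ℂ, IsClosed ((Kt t : Submodule ℂ H) : Set H) :=
    fun t => Submodule.isClosed_topologicalClosure _
  set N : ℂ → Submodule ℂ H := fun t => K ⊓ (Kt t)ᗮ with hNdef
  have hNcl : ∀ t : ℂ, IsClosed ((N t : Submodule ℂ H) : Set H) := by
    intro t
    have he : ((N t : Submodule ℂ H) : Set H) = (K : Set H) ∩ ((Kt t)ᗮ : Set H) := rfl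
    rw [he]
    exact hKcl.inter (Submodule.isClosed_orthogonal _)
  set E : ℂ → H →L[ℂ] H := fun t => projC (N t) (hNcl t) with hEdef
  have h1K : orb M η₁ ≤ K := le_trans le_sup_left (Submodule.le_topologicalClosure _)
  have h2K : orb M η₂ ≤ K := le_trans le_sup_right (Submodule.le_topologicalClosure _)
  have hKtK : ∀ t : ℂ, Kt t ≤ K := by
    intro t
    refine Submodule.topologicalClosure_minimal _ (Submodule.span_le.2 ?_) hKcl
    rintro _ ⟨T, hT, rfl⟩
    have he : T (η₁ + t • η₂) = T η₁ + t • T η₂ := by rw [map_add, map_smul]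
    show T (η₁ + t • η₂) ∈ (K : Set H)
    rw [SetLike.mem_coe, he]
    exact K.add_mem (h1K (apply_mem_orb M hT η₁)) (K.smul_mem t (h2K (apply_mem_orb M hT η₂)))
  have hsup : ∀ t s : ℂ, t ≠ s → K ≤ (Kt t ⊔ Kt s).topologicalClosure := by
    intro t s hts
    set Q := (Kt t ⊔ Kt s).topologicalClosure with hQdef
    have hQcl : IsClosed (Q : Set H) := Submodule.isClosed_topologicalClosure _
    have hmemt : ∀ T : H →L[ℂ] H, T ∈ M → T (η₁ + t • η₂) ∈ Q :=
      fun T hT => (le_trans le_sup_left (Submodule.le_topologicalClosure _) : Kt t ≤ Q)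
        (apply_mem_orb M hT _)
    have hmems : ∀ T : H →L[ℂ] H, T ∈ M → T (η₁ + s • η₂) ∈ Q :=
      fun T hT => (le_trans le_sup_right (Submodule.le_topologicalClosure _) : Kt s ≤ Q)
        (apply_mem_orb M hT _)
    have h2 : ∀ T : H →L[ℂ] H, T ∈ M → T η₂ ∈ Q := by
      intro T hT
      have e : T η₂ = (t - s)⁻¹ • (T (η₁ + t • η₂) - T (η₁ + s • η₂)) := by
        rw [map_add, map_add, map_smul, map_smul, add_sub_add_left_eq_sub, ← sub_smul,
          smul_smul, inv_mul_cancel₀ (sub_ne_zero.2 hts), one_smul]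
      rw [e]
      exact Q.smul_mem _ (Q.sub_mem (hmemt T hT) (hmems T hT))
    have h1 : ∀ T : H →L[ℂ] H, T ∈ M → T η₁ ∈ Q := by
      intro T hT
      have e : T η₁ = T (η₁ + t • η₂) - t • T η₂ := by
        rw [map_add, map_smul, add_sub_cancel_right]
      rw [e]
      exact Q.sub_mem (hmemt T hT) (Q.smul_mem _ (h2 T hT))
    refine Submodule.topologicalClosure_minimal _ (sup_le ?_ ?_) hQcl
    · refine Submodule.topologicalClosure_minimal _ (Submodule.span_le.2 ?_) hQcl
      rintro _ ⟨T, hT, rfl⟩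
      exact h1 T hT
    · refine Submodule.topologicalClosure_minimal _ (Submodule.span_le.2 ?_) hQcl
      rintro _ ⟨T, hT, rfl⟩
      exact h2 T hT
  have hInvK : Inv M K := inv_closure (inv_sup (inv_orb M η₁) (inv_orb M η₂))
  have hInvN : ∀ t : ℂ, Inv M (N t) := fun t => inv_inf hInvK (inv_orthogonal (inv_orb M _))
  have hEcomm : ∀ t : ℂ, ∀ T ∈ M, ∀ x : H, E t (T x) = T (E t x) :=
    fun t T hT x => projC_comm (hNcl t) (hInvN t) hT x
  have hEmem : ∀ t : ℂ, E t ∈ M.commutant := by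
    intro t
    rw [VonNeumannAlgebra.mem_commutant_iff]
    intro g hg
    ext x
    simp only [ContinuousLinearMap.mul_apply]
    exact (hEcomm t g hg x).symm
  have hEN : ∀ t : ℂ, ∀ x : H, E t x ∈ N t := fun t x => projC_mem _ _ _
  have hEE : ∀ t s : ℂ, t ≠ s → ∀ x : H, E t (E s x) = 0 := by
    intro t s hts x
    have hc : E t * E s = E s * E t := hab _ (hEmem t) _ (hEmem s)
    have h1 : E t (E s x) ∈ N t := hEN t _
    have h2 : E t (E s x) ∈ N s := by
      have he : E t (E s x) = E s (E t x) := by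
        have hcx := congrArg (fun f : H →L[ℂ] H => f x) hc
        simpa only [ContinuousLinearMap.mul_apply] using hcx
      rw [he]
      exact hEN s _
    have h1' := Submodule.mem_inf.1 h1
    have h2' := Submodule.mem_inf.1 h2
    have hy : E t (E s x) ∈ (Kt t ⊔ Kt s).topologicalClosure := hsup t s hts h1'.1
    have hz : ∀ u ∈ ((Kt t ⊔ Kt s : Submodule ℂ H) : Set H),
        ⟪u, E t (E s x)⟫_ℂ ∈ ({0} : Set ℂ) := by
      intro u hu
      rcases Submodule.mem_sup.1 hu with ⟨a, ha, b, hb, rfl⟩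
      rw [Set.mem_singleton_iff, inner_add_left,
        (Submodule.mem_orthogonal _ _).1 h1'.2 a ha,
        (Submodule.mem_orthogonal _ _).1 h2'.2 b hb, add_zero]
    have hself : ⟪E t (E s x), E t (E s x)⟫_ℂ = 0 := by
      have hcont : Continuous fun u : H => ⟪u, E t (E s x)⟫_ℂ :=
        continuous_id.inner continuous_const
      have hcl := map_mem_closure hcont hy hz
      simpa using hcl
    exact inner_self_eq_zero.1 hself
  set L : Set ℂ := {t : ℂ | t ≠ 0 ∧ Kt t ≠ K} with hLdef
  have hvanish : ∀ t ∈ L, E t η₁ ≠ 0 ∨ E t η₂ ≠ 0 := by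
    intro t ht
    by_contra hcon
    push_neg at hcon
    obtain ⟨he1, he2⟩ := hcon
    have hk : ∀ (η : H), E t η = 0 → orb M η ≤ LinearMap.ker (E t : H →ₗ[ℂ] H) := by
      intro η he
      refine Submodule.topologicalClosure_minimal _ (Submodule.span_le.2 ?_)
        (ContinuousLinearMap.isClosed_ker _)
      rintro _ ⟨T, hT, rfl⟩
      show E t (T η) = 0
      rw [hEcomm t T hT η, he, map_zero]
    have hker : K ≤ LinearMap.ker (E t : H →ₗ[ℂ] H) :=
      Submodule.topologicalClosure_minimal _ (sup_le (hk η₁ he1) (hk η₂ he2))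
        (ContinuousLinearMap.isClosed_ker _)
    have hNbot : ∀ y ∈ N t, y = (0 : H) := by
      intro y hy
      have h0 : E t y = 0 := hker (Submodule.mem_inf.1 hy).1
      rwa [show E t y = projC (N t) (hNcl t) y from rfl,
        projC_eq_self _ _ hy] at h0
    have hle : K ≤ Kt t := by
      intro y hy
      have hsub : y - projC (Kt t) (hKtcl t) y ∈ N t :=
        Submodule.mem_inf.2
          ⟨K.sub_mem hy (hKtK t (projC_mem _ _ _)), sub_projC_mem _ _ _⟩
      have h0 := hNbot _ hsub
      rw [sub_eq_zero] at h0
      rw [h0]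
      exact projC_mem _ _ _
    exact ht.2 (le_antisymm (hKtK t) hle)
  have count : ∀ η : H, {t : ℂ | t ∈ L ∧ E t η ≠ 0}.Countable := by
    intro η
    set S := {t : ℂ | t ∈ L ∧ E t η ≠ 0} with hSdef
    set v : S → H := fun i => ((‖E (i : ℂ) η‖⁻¹ : ℝ) : ℂ) • E (i : ℂ) η with hvdef
    have hinn : ∀ i : S, ⟪E (i : ℂ) η, η⟫_ℂ = ((‖E (i : ℂ) η‖ : ℝ) : ℂ) ^ 2 := by
      intro i
      have hid : E (i : ℂ) η = E (i : ℂ) (E (i : ℂ) η) :=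
        (projC_eq_self _ _ (hEN _ _)).symm
      calc ⟪E (i : ℂ) η, η⟫_ℂ = ⟪E (i : ℂ) (E (i : ℂ) η), η⟫_ℂ := by rw [← hid]
        _ = ⟪E (i : ℂ) η, E (i : ℂ) η⟫_ℂ := projC_inner _ _ _ _
        _ = ((‖E (i : ℂ) η‖ : ℝ) : ℂ) ^ 2 := inner_self_eq_norm_sq_to_K _
    have hnz : ∀ i : S, ‖E (i : ℂ) η‖ ≠ 0 := fun i => norm_ne_zero_iff.2 i.2.2
    have hv : Orthonormal ℂ v := by
      rw [orthonormal_iff_ite]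
      intro i j
      by_cases hij : i = j
      · subst hij
        rw [if_pos rfl]
        rw [hvdef]
        simp only []
        rw [inner_smul_left, inner_smul_right, inner_self_eq_norm_sq_to_K,
          Complex.conj_ofReal]
        norm_cast
        field_simp [hnz i]
        change ((1 / ‖E (i : ℂ) η‖ : ℝ) : ℂ) ^ 2 * ((‖E (i : ℂ) η‖ ^ 2 : ℝ) : ℂ) = 1
        exact_mod_cast (show (1 / ‖E (i : ℂ) η‖) ^ 2 * ‖E (i : ℂ) η‖ ^ 2 = (1 : ℝ) by
          field_simp [hnz i])
      · rw [if_neg hij]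
        have hts : (i : ℂ) ≠ (j : ℂ) := Subtype.coe_injective.ne hij
        have h0 : ⟪E (i : ℂ) η, E (j : ℂ) η⟫_ℂ = 0 := by
          rw [show E (i : ℂ) η = projC (N (i : ℂ)) (hNcl _) η from rfl,
            projC_inner]
          rw [show projC (N (i : ℂ)) (hNcl _) (E (j : ℂ) η) = E (i : ℂ) (E (j : ℂ) η)
            from rfl]
          rw [hEE _ _ hts, inner_zero_right]
        rw [hvdef]
        simp only []
        rw [inner_smul_left, inner_smul_right, h0, mul_zero, mul_zero]
    have hsum := hv.inner_products_summable (x := η)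
    have hterm : ∀ i : S, ⟪v i, η⟫_ℂ = ((‖E (i : ℂ) η‖ : ℝ) : ℂ) := by
      intro i
      rw [hvdef]
      simp only []
      rw [inner_smul_left, Complex.conj_ofReal, hinn i]
      norm_cast
      field_simp [hnz i]
    have hsupp : Function.support (fun i : S => ‖⟪v i, η⟫_ℂ‖ ^ 2) = Set.univ := by
      ext i
      simp only [Function.mem_support, Set.mem_univ, iff_true]
      rw [hterm i]
      intro hcon
      apply hnz i
      have : ‖((‖E (i : ℂ) η‖ : ℝ) : ℂ)‖ = 0 := by
        exact pow_eq_zero_iff (n := 2) (by norm_num) |>.1 hcon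
      rw [Complex.norm_real, Real.norm_eq_abs, abs_eq_zero] at this
      exact this
    have hcnt : (Set.univ : Set S).Countable := hsupp ▸ hsum.countable_support
    have : Countable S := Set.countable_univ_iff.1 hcnt
    exact Set.countable_coe_iff.1 this
  refine Set.Countable.mono ?_ ((count η₁).union (count η₂))
  intro t ht
  rcases hvanish t ht with h | h
  · exact Or.inl ⟨ht, h⟩
  · exact Or.inr ⟨ht, h⟩

end AbelianVNAOrbitAux

/-- Lemma 3.5(2°): for an abelian von Neumann algebra `𝒜` on a Hilbert space `H`,
the set of nonzero scalars `t` for which the closed linear span of the orbit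
`𝒜'(η₁ + t·η₂)` differs from the closed linear span of `𝒜'η₁ ∪ 𝒜'η₂`
is at most countable. -/
theorem abelian_vonNeumann_commutant_orbit_span_countable
    (H : Type*) [NormedAddCommGroup H] [InnerProductSpace ℂ H] [CompleteSpace H]
    (𝒜 : VonNeumannAlgebra H)
    (habelian : ∀ x ∈ 𝒜, ∀ y ∈ 𝒜, x * y = y * x)
    (η₁ η₂ : H) :
    {t : ℂ | t ≠ 0 ∧
      (Submodule.span ℂ
          ((fun T : H →L[ℂ] H => T (η₁ + t • η₂)) ''
            (𝒜.commutant : Set (H →L[ℂ] H)))).topologicalClosure ≠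
        ((Submodule.span ℂ
            ((fun T : H →L[ℂ] H => T η₁) '' (𝒜.commutant : Set (H →L[ℂ] H)))).topologicalClosure ⊔
          (Submodule.span ℂ
            ((fun T : H →L[ℂ] H => T η₂) ''
              (𝒜.commutant : Set (H →L[ℂ] H)))).topologicalClosure).topologicalClosure}.Countable := by
  have hab : ∀ x ∈ 𝒜.commutant.commutant, ∀ y ∈ 𝒜.commutant.commutant, x * y = y * x := by
    rw [VonNeumannAlgebra.commutant_commutant]
    exact habelian
  exact AbelianVNAOrbitAux.aux 𝒜.commutant hab η₁ η₂
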